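/- arXiv:1703.01882 — 2 statements merged into one kernel-verified Lean document; each statement's English description precedes it below -/
import Mathlib

section
/- Let n, k be positive natural numbers. Let M_b be an invertible 6×6 real matrix, M_j an invertible n×n real matrix, J_b a k×6 real matrix, J_j a k×n real matrix, and set Λ = J_j M_j⁻¹. Assume Λ Λᵀ is invertible and let Λ† = Λᵀ (Λ Λᵀ)⁻¹ and N_Λ = I_n − Λ† Λ. Let N_b be a k×k real matrix with J_bᵀ N_b = 0. Fix vectors h_b ∈ ℝ⁶, h_j ∈ ℝⁿ, d ∈ ℝᵏ, u₀ ∈ ℝⁿ. For f ∈ ℝᵏ define the control torque τ(f) = Λ† (J_b M_b⁻¹ (h_b − J_bᵀ f) + Λ (h_j − J_jᵀ f) − d) + N_Λ (h_j − J_jᵀ f + u₀) and the closed-loop joint acceleration s̈(f) = M_j⁻¹ (J_jᵀ f − h_j + τ(f)). Then for all f₁ ∈ ℝᵏ and f₀ ∈ ℝᵏ, s̈(f₁ + N_b f₀) = s̈(f₁); i.e., the closed-loop joint dynamics does not depend upon the wrench redundancy f₀. -/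
open Matrix

/-- Lemma 1: the closed-loop joint dynamics does not depend upon the
wrench redundancy `f₀`. -/
theorem closed_loop_joint_dynamics_independent_of_wrench_redundancy
    (n k : ℕ) (hn : 0 < n) (hk : 0 < k)
    (Mb : Matrix (Fin 6) (Fin 6) ℝ) (hMb : IsUnit Mb.det)
    (Mj : Matrix (Fin n) (Fin n) ℝ) (hMj : IsUnit Mj.det)
    (Jb : Matrix (Fin k) (Fin 6) ℝ) (Jj : Matrix (Fin k) (Fin n) ℝ)
    (Λ : Matrix (Fin k) (Fin n) ℝ) (hΛ : Λ = Jj * Mj⁻¹)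
    (hΛΛT : IsUnit (Λ * Λᵀ).det)
    (Λp : Matrix (Fin n) (Fin k) ℝ) (hΛp : Λp = Λᵀ * (Λ * Λᵀ)⁻¹)
    (NΛ : Matrix (Fin n) (Fin n) ℝ) (hNΛ : NΛ = 1 - Λp * Λ)
    (Nb : Matrix (Fin k) (Fin k) ℝ) (hNb : Jbᵀ * Nb = 0)
    (hb : Fin 6 → ℝ) (hj : Fin n → ℝ) (d : Fin k → ℝ) (u0 : Fin n → ℝ)
    (τ : (Fin k → ℝ) → (Fin n → ℝ))
    (hτ : ∀ f, τ f =
      Λp.mulVec (Jb.mulVec (Mb⁻¹.mulVec (hb - Jbᵀ.mulVec f))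
        + Λ.mulVec (hj - Jjᵀ.mulVec f) - d)
      + NΛ.mulVec (hj - Jjᵀ.mulVec f + u0))
    (sdd : (Fin k → ℝ) → (Fin n → ℝ))
    (hsdd : ∀ f, sdd f = Mj⁻¹.mulVec (Jjᵀ.mulVec f - hj + τ f)) :
    ∀ f₁ f₀ : Fin k → ℝ, sdd (f₁ + Nb.mulVec f₀) = sdd f₁ := by
  intro f₁ f₀
  have hJb : Jbᵀ.mulVec (Nb.mulVec f₀) = 0 := by
    rw [mulVec_mulVec, hNb, zero_mulVec]
  have hJb' : Jbᵀ.mulVec (f₁ + Nb.mulVec f₀) = Jbᵀ.mulVec f₁ := by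
    rw [mulVec_add, hJb, add_zero]
  set g := Jjᵀ.mulVec (Nb.mulVec f₀) with hg
  have hN : NΛ.mulVec g = g - Λp.mulVec (Λ.mulVec g) := by
    rw [hNΛ, sub_mulVec, one_mulVec, ← mulVec_mulVec]
  have hJj : Jjᵀ.mulVec (f₁ + Nb.mulVec f₀) = Jjᵀ.mulVec f₁ + g := by
    rw [mulVec_add]
  rw [hsdd, hsdd, hτ, hτ, hJb', hJj]
  congr 1
  have e1 : hj - (Jjᵀ.mulVec f₁ + g) = (hj - Jjᵀ.mulVec f₁) - g := by abel
  rw [e1]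
  simp only [mulVec_sub, mulVec_add, hN]
  abel
end

section
/- Let n, k be positive natural numbers. Let M_b be an invertible 6×6 real matrix, M_j an invertible n×n real matrix, J_b a k×6 real matrix, J_j a k×n real matrix, and set Λ = J_j M_j⁻¹. Assume Λ Λᵀ is invertible and let Λ† = Λᵀ (Λ Λᵀ)⁻¹ and N_Λ = I_n − Λ† Λ. Fix vectors h_b ∈ ℝ⁶, h_j ∈ ℝⁿ, d ∈ ℝᵏ, u₀ ∈ ℝⁿ. For f ∈ ℝᵏ define τ(f) = Λ† (J_b M_b⁻¹ (h_b − J_bᵀ f) + Λ (h_j − J_jᵀ f) − d) + N_Λ (h_j − J_jᵀ f + u₀). Then for every f ∈ ℝᵏ, the closed-loop joint dynamics satisfies the identity M_j s̈(f) := J_jᵀ f − h_j + τ(f) = Λ† J_b M_b⁻¹ (h_b − J_bᵀ f) − Λ† d + N_Λ u₀. In particular, the closed-loop joint dynamics depends on the contact wrench f only through J_bᵀ f, i.e., through the rate of change of the robot momentum. -/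
open Matrix

/-- The closed-loop joint dynamics `M_j s̈(f) = J_jᵀ f − h_j + τ(f)` equals
`Λ† J_b M_b⁻¹ (h_b − J_bᵀ f) − Λ† d + N_Λ u₀`, hence it depends on the contact
wrench `f` only through `J_bᵀ f`. -/
theorem closed_loop_joint_dynamics_identity
    (n k : ℕ) (hn : 0 < n) (hk : 0 < k)
    (Mb : Matrix (Fin 6) (Fin 6) ℝ) (hMb : IsUnit Mb.det)
    (Mj : Matrix (Fin n) (Fin n) ℝ) (hMj : IsUnit Mj.det)
    (Jb : Matrix (Fin k) (Fin 6) ℝ) (Jj : Matrix (Fin k) (Fin n) ℝ)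
    (Λ : Matrix (Fin k) (Fin n) ℝ) (hΛ : Λ = Jj * Mj⁻¹)
    (hΛΛT : IsUnit (Λ * Λᵀ).det)
    (Λp : Matrix (Fin n) (Fin k) ℝ) (hΛp : Λp = Λᵀ * (Λ * Λᵀ)⁻¹)
    (NΛ : Matrix (Fin n) (Fin n) ℝ) (hNΛ : NΛ = 1 - Λp * Λ)
    (hb : Fin 6 → ℝ) (hj : Fin n → ℝ) (d : Fin k → ℝ) (u0 : Fin n → ℝ)
    (τ : (Fin k → ℝ) → (Fin n → ℝ))
    (hτ : ∀ f, τ f =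
      Λp.mulVec (Jb.mulVec (Mb⁻¹.mulVec (hb - Jbᵀ.mulVec f))
        + Λ.mulVec (hj - Jjᵀ.mulVec f) - d)
      + NΛ.mulVec (hj - Jjᵀ.mulVec f + u0)) :
    ∀ f : Fin k → ℝ,
      Jjᵀ.mulVec f - hj + τ f =
        Λp.mulVec (Jb.mulVec (Mb⁻¹.mulVec (hb - Jbᵀ.mulVec f)))
          - Λp.mulVec d + NΛ.mulVec u0 := by
  intro f
  rw [hτ f, hNΛ]
  simp only [Matrix.mulVec_add, Matrix.mulVec_sub, Matrix.sub_mulVec,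
    Matrix.one_mulVec, ← Matrix.mulVec_mulVec]
  abel
end
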